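/- (Theorem 2, loss convergence — vanishing of the Categorical Discriminant Risk.) Let 0 < β ≤ 1 and c ≥ 1. For probability vectors u, v in ℝ^c (nonnegative entries summing to 1) define KL(u,v) = Σ_k u_k·log(u_k/v_k) (with the convention 0·log 0 = 0), w = (u+v)/2, and JS(u,v) = (1/2)(KL(u,w) + KL(v,w)). Let m_1 be a probability vector and let (y_t)_{t≥2} be probability vectors with y_t = y for all t ≥ k, where y has strictly positive entries. Define m_t = (1−β)·m_{t−1} + β·y_t for t ≥ 2. Then JS(m_t, y_t) → 0 as t → ∞. -/

import Mathlib

open Filter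

/-- A probability vector in `ℝ^c`: nonnegative entries summing to 1. -/
def IsProbVec {c : ℕ} (u : Fin c → ℝ) : Prop :=
  (∀ k, 0 ≤ u k) ∧ ∑ k, u k = 1

/-- Kullback–Leibler divergence between probability vectors (with the convention
`0 · log 0 = 0`, which holds automatically since `0 * x = 0` in `ℝ`). -/
noncomputable def KLvec {c : ℕ} (u v : Fin c → ℝ) : ℝ :=
  ∑ k, u k * Real.log (u k / v k)

/-- Jensen–Shannon divergence between probability vectors. -/
noncomputable def JSvec {c : ℕ} (u v : Fin c → ℝ) : ℝ :=
  (1 / 2) * (KLvec u (fun k => (u k + v k) / 2) + KLvec v (fun k => (u k + v k) / 2))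
/-!
Once the batch predictions are constant, `m_t - y` is multiplied by `1 - β` at every step, so
`m_t → y` geometrically. The penalty `JS(m_t, y)` is continuous at `(y, y)`, where the logarithms
are evaluated at positive arguments because `y` is positive, and `JS(y, y) = 0`.
-/

section Divergences

variable {c : ℕ}

theorem KLvec_self (u : Fin c → ℝ) : KLvec u u = 0 := by
  simp [KLvec, Real.log_div_self]

theorem JSvec_self (u : Fin c → ℝ) : JSvec u u = 0 := by
  simp [JSvec, add_self_div_two, KLvec_self]

theorem continuousAt_KLvec {u v : Fin c → ℝ} (hu : ∀ k, u k ≠ 0) (hv : ∀ k, v k ≠ 0) :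
    ContinuousAt (fun p : (Fin c → ℝ) × (Fin c → ℝ) => KLvec p.1 p.2) (u, v) := by
  unfold KLvec
  fun_prop (disch := simp [hu, hv])

theorem continuousAt_JSvec {u v : Fin c → ℝ} (hu : ∀ k, 0 < u k) (hv : ∀ k, 0 < v k) :
    ContinuousAt (fun p : (Fin c → ℝ) × (Fin c → ℝ) => JSvec p.1 p.2) (u, v) := by
  have hw : ∀ k, (u k + v k) / 2 ≠ 0 := fun k => by have := hu k; have := hv k; positivity
  unfold JSvec
  refine continuousAt_const.mul (.add ?_ ?_)
  · exact (continuousAt_KLvec (fun k => (hu k).ne') hw).comp (x := (u, v))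
      (f := fun p : (Fin c → ℝ) × (Fin c → ℝ) => (p.1, fun k => (p.1 k + p.2 k) / 2)) (by fun_prop)
  · exact (continuousAt_KLvec (fun k => (hv k).ne') hw).comp (x := (u, v))
      (f := fun p : (Fin c → ℝ) × (Fin c → ℝ) => (p.2, fun k => (p.1 k + p.2 k) / 2)) (by fun_prop)

end Divergences

theorem ema_sub_eq_pow_smul {R E : Type*} [CommRing R] [AddCommGroup E] [Module R E]
    {β : R} {m : ℕ → E} {y : E} {N : ℕ}
    (hstep : ∀ t ≥ N, m (t + 1) = (1 - β) • m t + β • y) (n : ℕ) :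
    m (n + N) - y = (1 - β) ^ n • (m N - y) := by
  induction n with
  | zero => simp
  | succ n ih =>
    rw [Nat.add_right_comm, hstep _ (Nat.le_add_left N n), pow_succ', mul_smul, ← ih]
    module

theorem tendsto_ema {E : Type*} [NormedAddCommGroup E] [NormedSpace ℝ E]
    {β : ℝ} (hβ0 : 0 < β) (hβ2 : β < 2) {m : ℕ → E} {y : E} {N : ℕ}
    (hstep : ∀ t ≥ N, m (t + 1) = (1 - β) • m t + β • y) :
    Tendsto m atTop (nhds y) := by
  have hpow : Tendsto (fun n => (1 - β) ^ n) atTop (nhds 0) :=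
    tendsto_pow_atTop_nhds_zero_of_abs_lt_one (abs_lt.2 ⟨by linarith, by linarith⟩)
  rw [← tendsto_add_atTop_iff_nat N, ← tendsto_sub_nhds_zero_iff]
  simpa [ema_sub_eq_pow_smul hstep] using hpow.smul_const (m N - y)

theorem cdr_tendsto_zero_general {c : ℕ}
    (β : ℝ) (hβ0 : 0 < β) (hβ1 : β ≤ 1)
    (m y' : ℕ → Fin c → ℝ) (y : Fin c → ℝ)
    (hypos : ∀ k, 0 < y k)
    (k : ℕ) (hy : ∀ t, k ≤ t → y' t = y)
    (hrec : ∀ t, 2 ≤ t → m t = (1 - β) • m (t - 1) + β • y' t) :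
    Tendsto (fun t => JSvec (m t) (y' t)) atTop (nhds 0) := by
  have hstep : ∀ t ≥ max k 1, m (t + 1) = (1 - β) • m t + β • y := fun t ht => by
    rw [hrec (t + 1) (by omega), Nat.add_sub_cancel, hy (t + 1) (by omega)]
  have hm : Tendsto m atTop (nhds y) := tendsto_ema hβ0 (by linarith) hstep
  have hy'lim : Tendsto y' atTop (nhds y) :=
    tendsto_const_nhds.congr' ((eventually_ge_atTop k).mono fun t ht => (hy t ht).symm)
  have h := (continuousAt_JSvec hypos hypos).tendsto.comp (hm.prodMk_nhds hy'lim)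
  rwa [JSvec_self] at h

/-- Theorem 2 (loss convergence, vanishing of the Categorical Discriminant Risk):
if the batch-average predictions are eventually the constant probability vector `y`
with strictly positive entries, then the CDR penalty `JS(m_t, y_t)` tends to `0`. -/
theorem cdr_tendsto_zero {c : ℕ} (hc : 1 ≤ c)
    (β : ℝ) (hβ0 : 0 < β) (hβ1 : β ≤ 1)
    (m y' : ℕ → Fin c → ℝ) (y : Fin c → ℝ)
    (hm1 : IsProbVec (m 1)) (hy' : ∀ t, 2 ≤ t → IsProbVec (y' t))
    (hypos : ∀ k, 0 < y k)
    (k : ℕ) (hy : ∀ t, k ≤ t → y' t = y)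
    (hrec : ∀ t, 2 ≤ t → m t = (1 - β) • m (t - 1) + β • y' t) :
    Tendsto (fun t => JSvec (m t) (y' t)) atTop (nhds 0) :=
  cdr_tendsto_zero_general β hβ0 hβ1 m y' y hypos k hy hrec
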